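/- Let A be a finite-dimensional unital associative algebra over an algebraically closed field of characteristic p with p ≠ 2 and p ≠ 3, with Jacobson radical R, let L = A^(k) for some k ≥ 0, set N = R ∩ L, and let B be a Jordan-Lie inner ideal of L. Then (i) the images of B and of core_L(B) in L/N coincide, and (ii) if core_L(B) = 0 then B ⊆ N. -/

import Mathlib

namespace Paper

variable (F A : Type*) [Field F] [Ring A] [Algebra F A]

/-- The derived series `A⁽ᵏ⁾` of the Lie algebra `A⁽⁻⁾` (as subspaces of `A`). -/
def derivedSeries : ℕ → Submodule F A
  | 0 => ⊤
  | (k+1) => Submodule.span F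
      {z : A | ∃ x ∈ derivedSeries k, ∃ y ∈ derivedSeries k, z = ⁅x, y⁆}

variable {F A}

/-- `B` is an inner ideal of the Lie algebra given by the subspace `L` of `A⁽⁻⁾`. -/
def IsInnerIdeal (L B : Submodule F A) : Prop :=
  B ≤ L ∧ ∀ b ∈ B, ∀ b' ∈ B, ∀ x ∈ L, ⁅b, ⁅b', x⁆⁆ ∈ B

/-- `B` is a Jordan-Lie inner ideal of `L`. -/
def IsJordanLie (L B : Submodule F A) : Prop :=
  IsInnerIdeal L B ∧ ∀ b ∈ B, ∀ b' ∈ B, b * b' = 0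

/-- Jacobson radical of `A` as an `F`-subspace. -/
noncomputable def radical : Submodule F A :=
  (Ideal.jacobson (⊥ : Ideal A)).restrictScalars F

/-- The Jacobson radical of a subalgebra `A'`, as a subset of `A`. -/
def subalgRad (A' : Subalgebra F A) : Set A :=
  Subtype.val '' ((Ideal.jacobson (⊥ : Ideal A')) : Set A')

/-- `c` represents a central idempotent of the quotient of the
(sub)algebra with carrier `S` by the ideal with carrier `ρ`. -/
def IsCentralIdempotentMod (S ρ : Set A) (c : A) : Prop :=
  c ∈ S ∧ (∀ a ∈ S, c * a - a * c ∈ ρ) ∧ c * c - c ∈ ρ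

/-- `c` represents a primitive central idempotent of the quotient mod `ρ`. -/
def IsPrimitiveCentralIdempotentMod (S ρ : Set A) (c : A) : Prop :=
  IsCentralIdempotentMod S ρ c ∧ c ∉ ρ ∧
    ¬ ∃ c₁ c₂ : A, IsCentralIdempotentMod S ρ c₁ ∧ IsCentralIdempotentMod S ρ c₂ ∧
      c₁ ∉ ρ ∧ c₂ ∉ ρ ∧ c₁ * c₂ ∈ ρ ∧ c₂ * c₁ ∈ ρ ∧ c - (c₁ + c₂) ∈ ρ

/-- The idempotent pair `(e, f)` is strict w.r.t. the quotient mod `ρ`: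
for every primitive central idempotent `c` of the quotient, `c·ē = 0 ↔ c·f̄ = 0`. -/
def IsStrictPairMod (S ρ : Set A) (e f : A) : Prop :=
  ∀ c : A, IsPrimitiveCentralIdempotentMod S ρ c → (c * e ∈ ρ ↔ c * f ∈ ρ)

/-- `(e,f)` is a strict idempotent pair of `A` (strictness w.r.t. `A/rad A`). -/
def IsStrictPair (e f : A) : Prop :=
  e * e = e ∧ f * f = f ∧
    IsStrictPairMod Set.univ ((Ideal.jacobson (⊥ : Ideal A)) : Set A) e f

/-- `J` is a two-sided ideal of the (possibly non-unital) algebra `P`. -/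
def IsTwoSidedIdealIn (P J : Submodule F A) : Prop :=
  J ≤ P ∧ ∀ p ∈ P, ∀ x ∈ J, p * x ∈ J ∧ x * p ∈ J

/-- The algebra with carrier `P` is 1-perfect: it has no two-sided ideals of
codimension 1. -/
def IsOnePerfect (P : Submodule F A) : Prop :=
  ¬ ∃ J : Submodule F A, IsTwoSidedIdealIn P J ∧
      Module.finrank F P = Module.finrank F J + 1


variable (F) in
/-- The descending chain `B₀ = B`, `Bₙ = [Bₙ₋₁,[Bₙ₋₁,L]]` of inner ideals; its
stable value is the core `core_L(B)`. -/
def coreSeq (L B : Submodule F A) : ℕ → Submodule F A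
  | 0 => B
  | (n+1) => Submodule.span F
      {z : A | ∃ b ∈ coreSeq L B n, ∃ b' ∈ coreSeq L B n, ∃ x ∈ L, z = ⁅b, ⁅b', x⁆⁆}


/-! An element `b` of `L = A⁽ᵏ⁾` with `b² = 0` is von Neumann regular modulo `R` with a witness
in `L`: for `k = 0` this is regularity of the semisimple ring `A/R`, and if `b ≡ bab` with
`a ∈ A⁽ᵏ⁾` and `b ∈ A⁽ᵏ⁺¹⁾`, then `a' = -½[[b,a],a] ∈ A⁽ᵏ⁺¹⁾` satisfies `ba'b = (bab)ab ≡ bab ≡ b`.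
For `b` in an inner ideal `B` this gives `b ≡ bab = -½[b,[b,a]] ∈ B₁` modulo `N = R ∩ L`, so
`Bₘ ⊆ Bₘ₊₁ + N` for every `m`, whence `B ⊆ Bₙ + N` while `Bₙ ⊆ B`. -/

theorem _root_.IsSemisimpleRing.exists_mul_mul_eq {S : Type*} [Ring S] [IsSemisimpleRing S]
    (b : S) : ∃ a, b * a * b = b := by
  obtain ⟨e, he, hspan⟩ := IsSemisimpleRing.ideal_eq_span_idempotent (Ideal.span {b})
  obtain ⟨x, rfl⟩ := Ideal.mem_span_singleton'.mp (hspan ▸ Ideal.mem_span_singleton_self b)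
  obtain ⟨a, hab⟩ := Ideal.mem_span_singleton'.mp (hspan ▸ Ideal.mem_span_singleton_self e)
  exact ⟨a, by rw [mul_assoc, hab, mul_assoc, he.eq]⟩

theorem _root_.IsArtinianRing.exists_sub_mul_mul_mem_jacobson {R : Type*} [Ring R]
    [IsArtinianRing R] (b : R) : ∃ a, b - b * a * b ∈ Ideal.jacobson (⊥ : Ideal R) := by
  rw [Ideal.jacobson_bot]
  obtain ⟨a', ha'⟩ := IsSemisimpleRing.exists_mul_mul_eq (Ideal.Quotient.mk (Ring.jacobson R) b)
  obtain ⟨a, rfl⟩ := Ideal.Quotient.mk_surjective a'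
  exact ⟨a, Ideal.Quotient.eq.mp (by simpa using ha'.symm)⟩

section SquareZero

variable {R : Type*} [Ring R] {b : R}

theorem lie_lie_eq_of_mul_self_eq_zero (hb : b * b = 0) (a : R) :
    ⁅b, ⁅b, a⁆⁆ = -(2 • (b * a * b)) := by
  have : ⁅b, ⁅b, a⁆⁆ = b * b * a - 2 • (b * a * b) + a * (b * b) := by
    simp only [Ring.lie_def]; noncomm_ring
  rw [this, hb]; simp

theorem mul_lie_lie_mul_eq_of_mul_self_eq_zero (hb : b * b = 0) (a : R) :
    b * ⁅⁅b, a⁆, a⁆ * b = -(2 • (b * a * b * (a * b))) := by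
  have : b * ⁅⁅b, a⁆, a⁆ * b =
      b * b * (a * a * b) - 2 • (b * a * b * (a * b)) + b * (a * a) * (b * b) := by
    simp only [Ring.lie_def]; noncomm_ring
  rw [this, hb]; simp

end SquareZero

theorem neg_inv_two_smul_neg_two_nsmul {V : Type*} [AddCommGroup V] [Module F V]
    (h2 : (2 : F) ≠ 0) (x : V) : (-(2 : F)⁻¹) • -(2 • x) = x := by
  rw [smul_neg, neg_smul, neg_neg, ← Nat.cast_smul_eq_nsmul F, smul_smul, Nat.cast_ofNat,
    inv_mul_cancel₀ h2, one_smul]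

theorem mul_mul_eq_smul_lie_lie (h2 : (2 : F) ≠ 0) {b : A} (hb : b * b = 0) (a : A) :
    b * a * b = (-(2 : F)⁻¹) • ⁅b, ⁅b, a⁆⁆ := by
  rw [lie_lie_eq_of_mul_self_eq_zero hb, neg_inv_two_smul_neg_two_nsmul h2]

theorem sub_mul_smul_lie_lie_mul_mem (h2 : (2 : F) ≠ 0) {I : Ideal A} [I.IsTwoSided] {a b : A}
    (hb : b * b = 0) (hab : b - b * a * b ∈ I) :
    b - b * ((-(2 : F)⁻¹) • ⁅⁅b, a⁆, a⁆) * b ∈ I := by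
  have : b - b * ((-(2 : F)⁻¹) • ⁅⁅b, a⁆, a⁆) * b =
      (b - b * a * b) + (b - b * a * b) * (a * b) := by
    rw [mul_smul_comm, smul_mul_assoc, mul_lie_lie_mul_eq_of_mul_self_eq_zero hb,
      neg_inv_two_smul_neg_two_nsmul h2]
    noncomm_ring
  rw [this]
  exact I.add_mem hab (I.mul_mem_right _ hab)

theorem derivedSeries_succ_le (k : ℕ) : derivedSeries F A (k + 1) ≤ derivedSeries F A k := by
  induction k with
  | zero => exact le_top
  | succ k ih =>
    refine Submodule.span_le.mpr ?_
    rintro z ⟨x, hx, y, hy, rfl⟩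
    exact Submodule.subset_span ⟨x, ih hx, y, ih hy, rfl⟩

theorem lie_mem_derivedSeries_succ {k : ℕ} {x y : A} (hx : x ∈ derivedSeries F A k)
    (hy : y ∈ derivedSeries F A k) : ⁅x, y⁆ ∈ derivedSeries F A (k + 1) :=
  Submodule.subset_span ⟨x, hx, y, hy, rfl⟩

theorem exists_mem_derivedSeries_sub_mul_mul_mem_jacobson [IsArtinianRing A] (h2 : (2 : F) ≠ 0)
    {k : ℕ} {b : A} (hb : b ∈ derivedSeries F A k) (hbb : b * b = 0) :
    ∃ a ∈ derivedSeries F A k, b - b * a * b ∈ Ideal.jacobson (⊥ : Ideal A) := by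
  induction k with
  | zero => simpa [derivedSeries] using IsArtinianRing.exists_sub_mul_mul_mem_jacobson b
  | succ k ih =>
    have hb' := derivedSeries_succ_le k hb
    obtain ⟨a, ha, hab⟩ := ih hb'
    refine ⟨(-(2 : F)⁻¹) • ⁅⁅b, a⁆, a⁆, Submodule.smul_mem _ _ ?_,
      sub_mul_smul_lie_lie_mul_mem h2 hbb hab⟩
    exact lie_mem_derivedSeries_succ
      (derivedSeries_succ_le k (lie_mem_derivedSeries_succ hb' ha)) ha

section Core

variable {L B N : Submodule F A}

theorem coreSeq_le_self (hB : IsInnerIdeal L B) (m : ℕ) : coreSeq F L B m ≤ B := by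
  induction m with
  | zero => exact le_rfl
  | succ m ih =>
    refine Submodule.span_le.mpr ?_
    rintro z ⟨b, hb, b', hb', x, hx, rfl⟩
    exact hB.2 b (ih hb) b' (ih hb') x hx

theorem coreSeq_le_coreSeq_succ_sup (h2 : (2 : F) ≠ 0) (hB : IsJordanLie L B)
    (hreg : ∀ b ∈ B, ∃ a ∈ L, b - b * a * b ∈ N) (m : ℕ) :
    coreSeq F L B m ≤ coreSeq F L B (m + 1) ⊔ (N ⊓ L) := by
  intro b hb
  have hbB := coreSeq_le_self hB.1 m hb
  obtain ⟨a, ha, hab⟩ := hreg b hbB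
  have hbab : b * a * b ∈ coreSeq F L B (m + 1) := by
    rw [mul_mul_eq_smul_lie_lie h2 (hB.2 b hbB b hbB)]
    exact Submodule.smul_mem _ _ (Submodule.subset_span ⟨b, hb, b, hb, a, ha, rfl⟩)
  have hbabL : b * a * b ∈ L := hB.1.1 (coreSeq_le_self hB.1 (m + 1) hbab)
  rw [← add_sub_cancel (b * a * b) b]
  exact Submodule.add_mem_sup hbab ⟨hab, L.sub_mem (hB.1.1 hbB) hbabL⟩

theorem le_coreSeq_sup (h2 : (2 : F) ≠ 0) (hB : IsJordanLie L B)
    (hreg : ∀ b ∈ B, ∃ a ∈ L, b - b * a * b ∈ N) (m : ℕ) :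
    B ≤ coreSeq F L B m ⊔ (N ⊓ L) := by
  induction m with
  | zero => exact le_sup_left
  | succ m ih => exact ih.trans (sup_le (coreSeq_le_coreSeq_succ_sup h2 hB hreg m) le_sup_right)

end Core

theorem core_bar_eq_general (F A : Type*) [Field F] (p : ℕ) [CharP F p]
    (hp2 : p ≠ 2) [Ring A] [Algebra F A] [FiniteDimensional F A]
    (k : ℕ) (B : Submodule F A)
    (hJLie : IsJordanLie (derivedSeries F A k) B)
    (N : Submodule F A) (hN : N = (radical : Submodule F A) ⊓ derivedSeries F A k)
    (n : ℕ) :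
    (∀ x ∈ B, ∃ y ∈ coreSeq F (derivedSeries F A k) B n, x - y ∈ N) ∧
    (∀ y ∈ coreSeq F (derivedSeries F A k) B n, ∃ x ∈ B, y - x ∈ N) ∧
    (coreSeq F (derivedSeries F A k) B n = ⊥ → B ≤ N) := by
  have h2 : (2 : F) ≠ 0 := Ring.two_ne_zero (by rwa [ringChar.eq F p])
  have : IsArtinianRing A := IsArtinianRing.of_finite F A
  subst hN
  have hB : B ≤ coreSeq F _ B n ⊔ (radical ⊓ derivedSeries F A k) :=
    le_coreSeq_sup h2 hJLie (fun b hb => exists_mem_derivedSeries_sub_mul_mul_mem_jacobson h2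
      (hJLie.1.1 hb) (hJLie.2 b hb b hb)) n
  refine ⟨fun x hx => ?_, fun y hy => ⟨y, coreSeq_le_self hJLie.1 n hy, by simp⟩,
    fun hbot => by simpa [hbot] using hB⟩
  obtain ⟨y, hy, z, hz, rfl⟩ := Submodule.mem_sup.mp (hB hx)
  exact ⟨y, hy, by simpa using hz⟩

/-- **Lemma.** Let `p ≠ 2,3`, `L = A⁽ᵏ⁾`, `N = R ∩ L` and let `B` be a Jordan-Lie
inner ideal of `L`.  Then (i) `B` and `core_L(B)` have the same image in `L/N`, and
(ii) if `core_L(B) = 0` then `B ⊆ N`.  (The core is the stable value of the chain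
`coreSeq`.) -/
theorem core_bar_eq (F A : Type*) [Field F] [IsAlgClosed F] (p : ℕ) [CharP F p]
    (hp2 : p ≠ 2) (hp3 : p ≠ 3) [Ring A] [Algebra F A] [FiniteDimensional F A]
    (k : ℕ) (B : Submodule F A)
    (hJLie : IsJordanLie (derivedSeries F A k) B)
    (N : Submodule F A) (hN : N = (radical : Submodule F A) ⊓ derivedSeries F A k)
    (n : ℕ) (hstab : coreSeq F (derivedSeries F A k) B (n + 1) =
      coreSeq F (derivedSeries F A k) B n) :
    (∀ x ∈ B, ∃ y ∈ coreSeq F (derivedSeries F A k) B n, x - y ∈ N) ∧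
    (∀ y ∈ coreSeq F (derivedSeries F A k) B n, ∃ x ∈ B, y - x ∈ N) ∧
    (coreSeq F (derivedSeries F A k) B n = ⊥ → B ≤ N) :=
  core_bar_eq_general F A p hp2 k B hJLie N hN n

end Paper
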